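/- Let C be a copula and C_∞ an extreme-value copula with Π_j u_j ≤ C_∞(u) and max-stability C_∞(u^{1/s})^s = C_∞(u). Suppose Condition (SO)_{b,d} holds: there are α_{b,d} : ℕ → (0,∞) with α_{b,d}(⌊r⌋) → 0 as r → ∞ and a non-null continuous S_{b,d} : [0,1]^d → ℝ such that (C(u^{1/⌊r⌋})^{⌊r⌋} − C_∞(u))/α_{b,d}(⌊r⌋) → S_{b,d}(u) as r → ∞, uniformly on [δ,1]^d for every δ ∈ (0,1). Then Condition (SO)_b holds with α_b(r) := α_{b,d}(⌊r⌋) and S_b := S_{b,d}; that is, (C(u^{1/r})^r − C_∞(u))/α_{b,d}(⌊r⌋) → S_{b,d}(u) as the real parameter r → ∞, uniformly on [δ,1]^d for every δ ∈ (0,1). -/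

import Mathlib

open Filter Topology

noncomputable section

/-- A `d`-variate stable tail dependence function: homogeneous of order 1, convex,
`L(e_j) = 1`, and `max ≤ L ≤ sum` on the nonnegative orthant. -/
def IsSTDF (d : ℕ) (L : (Fin d → ℝ) → ℝ) : Prop :=
  (∀ s : ℝ, 0 < s → ∀ x : Fin d → ℝ, (∀ j, 0 ≤ x j) → L (s • x) = s * L x) ∧
  ConvexOn ℝ (Set.Ici (0 : Fin d → ℝ)) L ∧
  (∀ j : Fin d, L (fun i => if i = j then (1 : ℝ) else 0) = 1) ∧
  (∀ x : Fin d → ℝ, (∀ j, 0 ≤ x j) → (∀ j, x j ≤ L x) ∧ L x ≤ ∑ j, x j)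

/-- The only properties of a copula that are used: `C(1,…,1) = 1`, `C(u) ≤ min_j u_j`,
and the ℓ¹-Lipschitz bound on the unit cube. -/
def IsCopulaLike (d : ℕ) (C : (Fin d → ℝ) → ℝ) : Prop :=
  C (fun _ => 1) = 1 ∧
  (∀ u : Fin d → ℝ, (∀ j, 0 ≤ u j ∧ u j ≤ 1) → ∀ j, C u ≤ u j) ∧
  (∀ u v : Fin d → ℝ, (∀ j, 0 ≤ u j ∧ u j ≤ 1) → (∀ j, 0 ≤ v j ∧ v j ≤ 1) →
    |C u - C v| ≤ ∑ j, |u j - v j|)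

/-- The extreme-value copula associated with the stable tail dependence function `L`:
`C_∞(u) = exp(−L(−log u_1,…,−log u_d))` for `u ∈ (0,1]^d`, and `0` if some `u_j = 0`. -/
def CinfFun (d : ℕ) (L : (Fin d → ℝ) → ℝ) (u : Fin d → ℝ) : ℝ :=
  if ∀ j, 0 < u j then Real.exp (-(L (fun j => -Real.log (u j)))) else 0

/-- Regular variation at infinity of index `ρ`. -/
def RegVary (f : ℝ → ℝ) (ρ : ℝ) : Prop :=
  ∀ x : ℝ, 0 < x → Filter.Tendsto (fun t => f (t * x) / f t) Filter.atTop (nhds (x ^ ρ))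

/-- POT form of the copula domain of attraction:
`t(1 − C(1 − x/t)) → L(x)` uniformly on `[0,T]^d` for every `T > 0`. -/
def PotDOA (d : ℕ) (C L : (Fin d → ℝ) → ℝ) : Prop :=
  ∀ T : ℝ, 0 < T → TendstoUniformlyOn
    (fun (t : ℝ) (x : Fin d → ℝ) => t * (1 - C (fun j => 1 - x j / t))) L Filter.atTop
    (Set.Icc (0 : Fin d → ℝ) (fun _ => T))

/-- BM form of the copula domain of attraction: `C(u^{1/r})^r → C_∞(u)` pointwise. -/
def BmDOA (d : ℕ) (C Cinf : (Fin d → ℝ) → ℝ) : Prop :=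
  ∀ u : Fin d → ℝ, (∀ j, 0 ≤ u j ∧ u j ≤ 1) →
    Filter.Tendsto (fun r : ℝ => C (fun j => u j ^ (1/r)) ^ r) Filter.atTop (nhds (Cinf u))

/-- The uniform-convergence part of Condition (SO)_p with auxiliary function `αp`
and limit `Sp`. -/
def SOpot (d : ℕ) (C L Sp : (Fin d → ℝ) → ℝ) (αp : ℝ → ℝ) : Prop :=
  ∀ T : ℝ, 0 < T → TendstoUniformlyOn
    (fun (t : ℝ) (x : Fin d → ℝ) => (t * (1 - C (fun j => 1 - x j / t)) - L x) / αp t)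
    Sp Filter.atTop (Set.Icc (0 : Fin d → ℝ) (fun _ => T))

/-- The uniform-convergence part of Condition (SO)_b with auxiliary function `αb`
and limit `Sb`. -/
def SObm (d : ℕ) (C Cinf Sb : (Fin d → ℝ) → ℝ) (αb : ℝ → ℝ) : Prop :=
  ∀ δ : ℝ, 0 < δ → δ < 1 → TendstoUniformlyOn
    (fun (r : ℝ) (u : Fin d → ℝ) => (C (fun j => u j ^ (1/r)) ^ r - Cinf u) / αb r)
    Sb Filter.atTop (Set.Icc (fun _ => δ) (fun _ => 1))

/-!
Put `m = ⌊r⌋` and `w = u^{m/r}`. Then `C(u^{1/r}) = C(w^{1/m})`, and max-stability gives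
`C_∞(u) = C_∞(w)^{r/m}`; so with `a = C(w^{1/m})^m` and `b = C_∞(w)` the quotient of (SO)_b is
`(a^{r/m} - b^{r/m}) / α(m)`, while that of (SO)_{b,d} at `w` is `(a - b) / α(m)`. By the mean
value theorem for `x ↦ x^p - x` on `[c, 1]`, where `c = δ^d / 2` bounds `a` and `b` from below,
the two differ by at most `(r/m - 1) (1 - log c) |a - b| / α(m)`, which tends to `0` because
`r/m → 1` and `(a - b) / α(m)` stays bounded. Since `w → u` uniformly on `[δ,1]^d` and `S` is
uniformly continuous there, evaluating at `w` instead of `u` costs nothing in the limit.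
-/

open Set

lemma abs_mul_rpow_sub_one_sub_one_le {c ξ p : ℝ} (hc : 0 < c) (hξ : ξ ∈ Icc c 1) (hp : 1 ≤ p) :
    |p * ξ ^ (p - 1) - 1| ≤ (p - 1) * (1 - Real.log c) := by
  have hξ0 : 0 < ξ := hc.trans_le hξ.1
  have hle_one : ξ ^ (p - 1) ≤ 1 := Real.rpow_le_one hξ0.le hξ.2 (by linarith)
  have hlog : Real.log c ≤ Real.log ξ := Real.log_le_log hc hξ.1
  have hlog_nonpos : Real.log ξ ≤ 0 := Real.log_nonpos hξ0.le hξ.2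
  have hge : 1 + (p - 1) * Real.log ξ ≤ ξ ^ (p - 1) := by
    rw [Real.rpow_def_of_pos hξ0]
    linarith [Real.add_one_le_exp (Real.log ξ * (p - 1))]
  have hnonneg : 0 ≤ ξ ^ (p - 1) := Real.rpow_nonneg hξ0.le _
  rw [abs_le]
  constructor <;> nlinarith

lemma abs_rpow_sub_rpow_sub_sub_le {c a b p : ℝ} (hc : 0 < c) (ha : a ∈ Icc c 1)
    (hb : b ∈ Icc c 1) (hp : 1 ≤ p) :
    |a ^ p - b ^ p - (a - b)| ≤ (p - 1) * (1 - Real.log c) * |a - b| := by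
  have hderiv : ∀ x ∈ Icc c 1,
      HasDerivWithinAt (fun x : ℝ => x ^ p - x) (p * x ^ (p - 1) - 1) (Icc c 1) x :=
    fun x _ => ((Real.hasDerivAt_rpow_const (Or.inr hp)).sub (hasDerivAt_id x)).hasDerivWithinAt
  have := (convex_Icc c 1).norm_image_sub_le_of_norm_hasDerivWithin_le hderiv
    (fun x hx => abs_mul_rpow_sub_one_sub_one_le hc hx hp) hb ha
  simp only [Real.norm_eq_abs] at this
  convert this using 2
  ring

lemma one_sub_rpow_one_div_le {u : ℝ} (hu : 0 < u) (r : ℝ) :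
    1 - u ^ (1 / r) ≤ -Real.log u / r := by
  rw [Real.rpow_def_of_pos hu]
  linarith [Real.add_one_le_exp (Real.log u * (1 / r)),
    show Real.log u * (1 / r) = -(-Real.log u / r) by ring]

namespace IsSTDF

variable {d : ℕ} {L : (Fin d → ℝ) → ℝ}

lemma map_zero (hL : IsSTDF d L) : L 0 = 0 := by
  have h := hL.1 2 two_pos 0 (fun _ => le_rfl)
  rw [smul_zero] at h
  linarith

lemma nonneg (hL : IsSTDF d L) {x : Fin d → ℝ} (hx : ∀ j, 0 ≤ x j) : 0 ≤ L x := by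
  cases isEmpty_or_nonempty (Fin d) with
  | inl _ => rw [Subsingleton.elim x 0, hL.map_zero]
  | inr h => exact (hx h.some).trans ((hL.2.2.2 x hx).1 h.some)

end IsSTDF

section CinfFun

variable {d : ℕ} {L : (Fin d → ℝ) → ℝ} {u : Fin d → ℝ}

lemma CinfFun_of_pos (hu : ∀ j, 0 < u j) :
    CinfFun d L u = Real.exp (-(L (fun j => -Real.log (u j)))) := if_pos hu

lemma CinfFun_pos (hu : ∀ j, 0 < u j) : 0 < CinfFun d L u := by
  rw [CinfFun_of_pos hu]; exact Real.exp_pos _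

lemma neg_log_apply_nonneg (hu : ∀ j, 0 < u j ∧ u j ≤ 1) (j : Fin d) :
    0 ≤ -Real.log (u j) :=
  neg_nonneg.2 (Real.log_nonpos (hu j).1.le (hu j).2)

lemma CinfFun_le_one (hL : IsSTDF d L) (hu : ∀ j, 0 < u j ∧ u j ≤ 1) : CinfFun d L u ≤ 1 := by
  rw [CinfFun_of_pos fun j => (hu j).1, Real.exp_le_one_iff, neg_nonpos]
  exact hL.nonneg (neg_log_apply_nonneg hu)

lemma prod_le_CinfFun (hL : IsSTDF d L) (hu : ∀ j, 0 < u j ∧ u j ≤ 1) :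
    ∏ j, u j ≤ CinfFun d L u := by
  rw [CinfFun_of_pos fun j => (hu j).1, ← Real.exp_log (Finset.prod_pos fun j _ => (hu j).1),
    Real.log_prod fun j _ => (hu j).1.ne', Real.exp_le_exp]
  have := (hL.2.2.2 _ (neg_log_apply_nonneg hu)).2
  rw [Finset.sum_neg_distrib] at this
  linarith

lemma CinfFun_rpow (hL : IsSTDF d L) (hu : ∀ j, 0 < u j ∧ u j ≤ 1) {s : ℝ} (hs : 0 < s) :
    CinfFun d L (fun j => u j ^ s) = CinfFun d L u ^ s := by
  rw [CinfFun_of_pos fun j => Real.rpow_pos_of_pos (hu j).1 s, CinfFun_of_pos fun j => (hu j).1,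
    ← Real.exp_mul]
  have hlog : (fun j => -Real.log (u j ^ s)) = s • fun j => -Real.log (u j) := by
    funext j
    simp only [Real.log_rpow (hu j).1, Pi.smul_apply, smul_eq_mul]
    ring
  rw [hlog, hL.1 s hs _ (neg_log_apply_nonneg hu)]
  ring_nf

end CinfFun

namespace IsCopulaLike

variable {d : ℕ} {C : (Fin d → ℝ) → ℝ}

lemma le_one (hC : IsCopulaLike d C) {v : Fin d → ℝ} (hv : ∀ j, 0 ≤ v j ∧ v j ≤ 1) : C v ≤ 1 := by
  cases isEmpty_or_nonempty (Fin d) with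
  | inl _ => rw [Subsingleton.elim v fun _ => 1, hC.1]
  | inr h => exact (hC.2.1 v hv h.some).trans (hv h.some).2

lemma pos_of_sum_lt_one (hC : IsCopulaLike d C) {v : Fin d → ℝ} (hv : ∀ j, 0 ≤ v j ∧ v j ≤ 1)
    (hsum : ∑ j, (1 - v j) < 1) : 0 < C v := by
  have h := hC.2.2 v (fun _ => 1) hv fun _ => ⟨zero_le_one, le_rfl⟩
  rw [hC.1] at h
  simp only [abs_sub_comm (v _), abs_of_nonneg (sub_nonneg.2 (hv _).2)] at h
  linarith [neg_abs_le (C v - 1)]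

lemma rpow_one_div_pos (hC : IsCopulaLike d C) {δ r : ℝ} (hδ : 0 < δ) (hr : 0 < r)
    (hrδ : d * -Real.log δ < r) {u : Fin d → ℝ} (hu : u ∈ Icc (fun _ => δ) (fun _ => 1)) :
    0 < C (fun j => u j ^ (1 / r)) := by
  have hu0 : ∀ j, 0 < u j := fun j => hδ.trans_le (hu.1 j)
  refine hC.pos_of_sum_lt_one (fun j => ⟨Real.rpow_nonneg (hu0 j).le _,
    Real.rpow_le_one (hu0 j).le (hu.2 j) (by positivity)⟩) ?_
  calc ∑ j, (1 - u j ^ (1 / r)) ≤ ∑ _j : Fin d, -Real.log δ / r :=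
        Finset.sum_le_sum fun j _ => (one_sub_rpow_one_div_le (hu0 j) r).trans <|
          div_le_div_of_nonneg_right (neg_le_neg (Real.log_le_log hδ (hu.1 j))) hr.le
    _ = d * -Real.log δ / r := by
          rw [Finset.sum_const, Finset.card_univ, Fintype.card_fin, nsmul_eq_mul, mul_div_assoc]
    _ < 1 := (div_lt_one hr).2 hrδ

end IsCopulaLike

section UniformConvergence

variable {ι α β : Type*} {l : Filter ι} {s : Set α}

theorem TendstoUniformlyOn.comp_of_tendstoUniformlyOn_id [UniformSpace α] [UniformSpace β]
    {F : ι → α → β} {f : α → β} {φ : ι → α → α} (hF : TendstoUniformlyOn F f l s)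
    (hf : UniformContinuousOn f s) (hφ : TendstoUniformlyOn φ id l s)
    (hφs : ∀ᶠ i in l, MapsTo (φ i) s s) :
    TendstoUniformlyOn (fun i x => F i (φ i x)) f l s := by
  intro V hV
  obtain ⟨W, hW, hWV⟩ := comp_mem_uniformity_sets hV
  have hU := mem_inf_principal.1 (hf hW)
  filter_upwards [hF W hW, hφ _ hU, hφs] with i hFi hφi hφsi x hx
  exact hWV ⟨f (φ i x), hφi x hx ⟨hx, hφsi hx⟩, hFi _ (hφsi hx)⟩

theorem TendstoUniformlyOn.of_dist_le [PseudoMetricSpace β] {F G : ι → α → β} {f : α → β}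
    (hF : TendstoUniformlyOn F f l s) {e : ι → ℝ} (he : Tendsto e l (𝓝 0))
    (hGF : ∀ᶠ i in l, ∀ x ∈ s, dist (G i x) (F i x) ≤ e i) : TendstoUniformlyOn G f l s := by
  rw [Metric.tendstoUniformlyOn_iff] at hF ⊢
  intro ε hε
  filter_upwards [hF (ε / 2) (half_pos hε), he.eventually (gt_mem_nhds (half_pos hε)), hGF]
    with i hFi hei hGFi x hx
  calc dist (f x) (G i x) ≤ dist (f x) (F i x) + dist (G i x) (F i x) := dist_triangle_right _ _ _
    _ < ε := by linarith [hFi x hx, hGFi x hx]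

end UniformConvergence

section Box

variable {d : ℕ} {δ : ℝ}

lemma abs_rpow_sub_self_le {x s : ℝ} (hδ : 0 < δ) (hx : x ∈ Icc δ 1) (hs : s ≤ 1) :
    |x ^ s - x| ≤ δ ^ (s - 1) - 1 := by
  have hx0 : 0 < x := hδ.trans_le hx.1
  have hsplit : x ^ s = x * x ^ (s - 1) := by
    rw [mul_comm, ← Real.rpow_add_one hx0.ne', sub_add_cancel]
  have hge : 1 ≤ x ^ (s - 1) := Real.one_le_rpow_of_pos_of_le_one_of_nonpos hx0 hx.2 (by linarith)
  have hle : x ^ (s - 1) ≤ δ ^ (s - 1) := Real.rpow_le_rpow_of_nonpos hδ hx.1 (by linarith)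
  rw [hsplit, abs_of_nonneg (by nlinarith)]
  nlinarith [hx.2]

lemma mapsTo_rpow_Icc {s : ℝ} (hδ : 0 < δ) (hs0 : 0 ≤ s) (hs1 : s ≤ 1) :
    MapsTo (fun (u : Fin d → ℝ) j => u j ^ s) (Icc (fun _ => δ) (fun _ => 1))
      (Icc (fun _ => δ) (fun _ => 1)) := fun u hu =>
  ⟨fun j => (hu.1 j).trans <| by
      simpa using Real.rpow_le_rpow_of_exponent_ge (hδ.trans_le (hu.1 j)) (hu.2 j) hs1,
    fun j => Real.rpow_le_one (hδ.le.trans (hu.1 j)) (hu.2 j) hs0⟩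

lemma tendstoUniformlyOn_rpow_natFloor_div (hδ : 0 < δ) :
    TendstoUniformlyOn (fun (r : ℝ) (u : Fin d → ℝ) j => u j ^ ((⌊r⌋₊ : ℝ) / r)) id atTop
      (Icc (fun _ => δ) (fun _ => 1)) := by
  have he : Tendsto (fun r : ℝ => δ ^ ((⌊r⌋₊ : ℝ) / r - 1) - 1) atTop (𝓝 0) := by
    simpa using ((Real.continuousAt_const_rpow hδ.ne').tendsto.comp
      (tendsto_nat_floor_div_atTop.sub_const 1)).sub_const 1
  rw [Metric.tendstoUniformlyOn_iff]
  intro ε hε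
  filter_upwards [he.eventually (gt_mem_nhds hε), eventually_gt_atTop 0] with r hrε hr u hu
  refine (dist_pi_lt_iff hε).2 fun j => lt_of_le_of_lt ?_ hrε
  rw [dist_comm, Real.dist_eq]
  exact abs_rpow_sub_self_le hδ ⟨hu.1 j, hu.2 j⟩ (div_le_one_of_le₀ (Nat.floor_le hr.le) hr.le)

end Box

lemma abs_rpow_sub_CinfFun_sub_le {d : ℕ} {L : (Fin d → ℝ) → ℝ} (hL : IsSTDF d L)
    {δ r c : ℝ} {m : ℕ} (hδ : 0 < δ) (hm : 0 < m) (hmr : (m : ℝ) ≤ r)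
    {u : Fin d → ℝ} (hu : u ∈ Icc (fun _ => δ) (fun _ => 1)) (hc : c ∈ Ioc 0 1)
    (hclose : |c ^ (m : ℝ) - CinfFun d L (fun j => u j ^ ((m : ℝ) / r))| ≤ δ ^ d / 2) :
    |c ^ r - CinfFun d L u - (c ^ (m : ℝ) - CinfFun d L (fun j => u j ^ ((m : ℝ) / r)))| ≤
      (r / m - 1) * (1 - Real.log (δ ^ d / 2)) *
        |c ^ (m : ℝ) - CinfFun d L (fun j => u j ^ ((m : ℝ) / r))| := by
  set w : Fin d → ℝ := fun j => u j ^ ((m : ℝ) / r)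
  set a := c ^ (m : ℝ)
  set b := CinfFun d L w
  have hm0 : (0 : ℝ) < m := Nat.cast_pos.2 hm
  have hr : 0 < r := hm0.trans_le hmr
  have hu' : ∀ j, 0 < u j ∧ u j ≤ 1 := fun j => ⟨hδ.trans_le (hu.1 j), hu.2 j⟩
  have hw := mapsTo_rpow_Icc hδ (div_pos hm0 hr).le ((div_le_one hr).2 hmr) hu
  have hw' : ∀ j, 0 < w j ∧ w j ≤ 1 := fun j => ⟨hδ.trans_le (hw.1 j), hw.2 j⟩
  have ha_pow : a ^ (r / m) = c ^ r := by
    rw [← Real.rpow_mul hc.1.le, mul_div_cancel₀ _ hm0.ne']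
  have hb_pow : b ^ (r / m) = CinfFun d L u := by
    rw [show b = _ from CinfFun_rpow hL hu' (div_pos hm0 hr),
      ← Real.rpow_mul (CinfFun_pos fun j => (hu' j).1).le,
      div_mul_div_comm, mul_comm, div_self (by positivity), Real.rpow_one]
  have hδb : δ ^ d ≤ b :=
    calc δ ^ d = ∏ _j : Fin d, δ := by simp
      _ ≤ ∏ j, w j := Finset.prod_le_prod (fun _ _ => hδ.le) fun j _ => hw.1 j
      _ ≤ b := prod_le_CinfFun hL hw'
  have hb : b ∈ Icc (δ ^ d / 2) 1 := ⟨by linarith [pow_pos hδ d], CinfFun_le_one hL hw'⟩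
  have ha : a ∈ Icc (δ ^ d / 2) 1 :=
    ⟨by linarith [neg_abs_le (a - b)], Real.rpow_le_one hc.1.le hc.2 hm0.le⟩
  rw [← ha_pow, ← hb_pow]
  exact abs_rpow_sub_rpow_sub_sub_le (by positivity) ha hb ((le_div_iff₀ hm0).2 (by linarith))

lemma dist_rpow_sub_CinfFun_div_le {d : ℕ} {C L : (Fin d → ℝ) → ℝ} (hL : IsSTDF d L)
    (hC : IsCopulaLike d C) {δ r α M : ℝ} {m : ℕ} (hδ : 0 < δ) (hδ1 : δ < 1) (hm : 0 < m)
    (hmr : (m : ℝ) ≤ r) (hrδ : d * -Real.log δ < r) (hα : 0 < α) (hαM : α * (M + 1) < δ ^ d / 2)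
    {u : Fin d → ℝ} (hu : u ∈ Icc (fun _ => δ) (fun _ => 1))
    (hbound : |(C (fun j => u j ^ (1 / r)) ^ (m : ℝ) -
      CinfFun d L (fun j => u j ^ ((m : ℝ) / r))) / α| ≤ M + 1) :
    dist ((C (fun j => u j ^ (1 / r)) ^ r - CinfFun d L u) / α)
      ((C (fun j => u j ^ (1 / r)) ^ (m : ℝ) - CinfFun d L (fun j => u j ^ ((m : ℝ) / r))) / α) ≤
      (r / m - 1) * (1 - Real.log (δ ^ d / 2)) * (M + 1) := by
  set c := C fun j => u j ^ (1 / r)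
  set b := CinfFun d L fun j => u j ^ ((m : ℝ) / r)
  have hm0 : (0 : ℝ) < m := Nat.cast_pos.2 hm
  have hr : 0 < r := hm0.trans_le hmr
  have hu0 : ∀ j, 0 ≤ u j := fun j => hδ.le.trans (hu.1 j)
  have hc : c ∈ Ioc 0 1 := ⟨hC.rpow_one_div_pos hδ hr hrδ hu, hC.le_one fun j =>
    ⟨Real.rpow_nonneg (hu0 j) _, Real.rpow_le_one (hu0 j) (hu.2 j) (by positivity)⟩⟩
  rw [abs_div, abs_of_pos hα, div_le_iff₀ hα] at hbound
  have hp : 0 ≤ r / m - 1 := by rw [sub_nonneg, le_div_iff₀ hm0, one_mul]; exact hmr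
  have hK : 0 ≤ 1 - Real.log (δ ^ d / 2) := by
    linarith [Real.log_nonpos (by positivity : 0 ≤ δ ^ d / 2)
      (by linarith [pow_le_one₀ (n := d) hδ.le hδ1.le])]
  rw [Real.dist_eq, ← sub_div, abs_div, abs_of_pos hα, div_le_iff₀ hα]
  calc _ ≤ (r / m - 1) * (1 - Real.log (δ ^ d / 2)) * |c ^ (m : ℝ) - b| :=
        abs_rpow_sub_CinfFun_sub_le hL hδ hm hmr hu hc (by linarith)
    _ ≤ (r / m - 1) * (1 - Real.log (δ ^ d / 2)) * (M + 1) * α := by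
        rw [mul_assoc _ (M + 1)]
        exact mul_le_mul_of_nonneg_left hbound (mul_nonneg hp hK)

theorem statement3_general {d : ℕ} (C L Sbd : (Fin d → ℝ) → ℝ) (αbd : ℕ → ℝ)
    (hL : IsSTDF d L) (hC : IsCopulaLike d C)
    (hαpos : ∀ n : ℕ, 0 < αbd n)
    (hα0 : Filter.Tendsto (fun r : ℝ => αbd ⌊r⌋₊) Filter.atTop (nhds 0))
    (hScont : ContinuousOn Sbd (Set.Icc (0 : Fin d → ℝ) (fun _ => 1)))
    (hSO : ∀ δ : ℝ, 0 < δ → δ < 1 → TendstoUniformlyOn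
      (fun (r : ℝ) (u : Fin d → ℝ) =>
        (C (fun j => u j ^ (1 / (⌊r⌋₊ : ℝ))) ^ (⌊r⌋₊ : ℝ) - CinfFun d L u) / αbd ⌊r⌋₊)
      Sbd Filter.atTop (Set.Icc (fun _ : Fin d => δ) (fun _ => 1))) :
    ∀ δ : ℝ, 0 < δ → δ < 1 → TendstoUniformlyOn
      (fun (r : ℝ) (u : Fin d → ℝ) =>
        (C (fun j => u j ^ (1 / r)) ^ r - CinfFun d L u) / αbd ⌊r⌋₊)
      Sbd Filter.atTop (Set.Icc (fun _ : Fin d => δ) (fun _ => 1)) := by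
  intro δ hδ hδ1
  have hbox : Icc (fun _ => δ) (fun _ => 1) ⊆ Icc (0 : Fin d → ℝ) (fun _ => 1) :=
    Icc_subset_Icc (fun _ => hδ.le) le_rfl
  obtain ⟨M, hM⟩ := isCompact_Icc.exists_bound_of_continuousOn hScont
  have hcomp := (hSO δ hδ hδ1).comp_of_tendstoUniformlyOn_id
    ((isCompact_Icc.uniformContinuousOn_of_continuous hScont).mono hbox)
    (tendstoUniformlyOn_rpow_natFloor_div hδ)
    ((eventually_gt_atTop 0).mono fun r hr =>
      mapsTo_rpow_Icc hδ (by positivity) (div_le_one_of_le₀ (Nat.floor_le hr.le) hr.le))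
  have he : Tendsto (fun r : ℝ => (r / ⌊r⌋₊ - 1) * (1 - Real.log (δ ^ d / 2)) * (M + 1))
      atTop (𝓝 0) := by
    simpa using (((tendsto_nat_floor_div_atTop (R := ℝ)).inv₀ one_ne_zero).sub_const 1).mul_const
      (1 - Real.log (δ ^ d / 2)) |>.mul_const (M + 1)
  have hsmall : ∀ᶠ r : ℝ in atTop, αbd ⌊r⌋₊ * (M + 1) < δ ^ d / 2 := by
    have h := hα0.mul_const (M + 1)
    rw [zero_mul] at h
    exact h.eventually (gt_mem_nhds (by positivity))
  refine hcomp.of_dist_le he ?_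
  filter_upwards [Metric.tendstoUniformlyOn_iff.1 hcomp 1 one_pos, hsmall, eventually_ge_atTop 1,
    eventually_gt_atTop (d * -Real.log δ)] with r hF hα hr hrδ u hu
  have hm : 0 < ⌊r⌋₊ := Nat.floor_pos.2 hr
  have hblock :
      (fun j => (u j ^ ((⌊r⌋₊ : ℝ) / r)) ^ (1 / (⌊r⌋₊ : ℝ))) = fun j => u j ^ (1 / r) := by
    have : (⌊r⌋₊ : ℝ) ≠ 0 := by positivity
    funext j
    rw [← Real.rpow_mul (hδ.le.trans (hu.1 j))]
    field_simp
  have hFu := hF u hu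
  simp only [hblock] at hFu ⊢
  exact dist_rpow_sub_CinfFun_div_le hL hC hδ hδ1 hm (Nat.floor_le (by linarith)) hrδ (hαpos _) hα
    hu ((norm_le_of_mem_closedBall (Metric.mem_closedBall'.2 hFu.le)).trans
      (add_le_add_left (hM u (hbox hu)) 1))

/-- Lemma 2.3. Condition (SO)_{b,d} (along integer block sizes `⌊r⌋`) implies
Condition (SO)_b (along real `r`) with `α_b(r) = α_{b,d}(⌊r⌋)` and `S_b = S_{b,d}`. -/
theorem statement3 {d : ℕ} (C L Sbd : (Fin d → ℝ) → ℝ) (αbd : ℕ → ℝ)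
    (hL : IsSTDF d L) (hC : IsCopulaLike d C)
    (hαpos : ∀ n : ℕ, 0 < αbd n)
    (hα0 : Filter.Tendsto (fun r : ℝ => αbd ⌊r⌋₊) Filter.atTop (nhds 0))
    (hScont : ContinuousOn Sbd (Set.Icc (0 : Fin d → ℝ) (fun _ => 1)))
    (hSnonnull : ∃ u : Fin d → ℝ, (∀ j, 0 ≤ u j ∧ u j ≤ 1) ∧ Sbd u ≠ 0)
    (hSO : ∀ δ : ℝ, 0 < δ → δ < 1 → TendstoUniformlyOn
      (fun (r : ℝ) (u : Fin d → ℝ) =>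
        (C (fun j => u j ^ (1 / (⌊r⌋₊ : ℝ))) ^ (⌊r⌋₊ : ℝ) - CinfFun d L u) / αbd ⌊r⌋₊)
      Sbd Filter.atTop (Set.Icc (fun _ : Fin d => δ) (fun _ => 1))) :
    ∀ δ : ℝ, 0 < δ → δ < 1 → TendstoUniformlyOn
      (fun (r : ℝ) (u : Fin d → ℝ) =>
        (C (fun j => u j ^ (1 / r)) ^ r - CinfFun d L u) / αbd ⌊r⌋₊)
      Sbd Filter.atTop (Set.Icc (fun _ : Fin d => δ) (fun _ => 1)) :=
  statement3_general C L Sbd αbd hL hC hαpos hα0 hScont hSO
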